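/- arXiv:1202.1456 — 4 statements merged into one kernel-verified Lean document; each statement's English description precedes it below -/
import Mathlib

section
/- Let ρ : [0,b] → (0,1) be differentiable and satisfy the ODE ρ'(y)/ρ(y) + ρ'(y)/(1−ρ(y)) = K(1−ρ(y)) for a constant K < 0, with ρ(0) = ρ₀ ∈ (0,1). Then for all y ∈ [0,b], K·y = ln[ (ρ(y)/(1−ρ(y)))·((1−ρ₀)/ρ₀) ] + 1/(1−ρ(y)) − 1/(1−ρ₀). -/
/-! The ODE says `ρ' = K ρ (1 - ρ)²`, and the potential
`Φ(p) = log (p / (1 - p)) + 1 / (1 - p)` has `Φ'(p) = 1 / (p (1 - p)²)`.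
Hence `Φ ∘ ρ` has constant derivative `K`, so `Φ (ρ y) - Φ ρ₀ = K y`. -/

open Set

noncomputable def chokePotential (p : ℝ) : ℝ :=
  Real.log (p / (1 - p)) + 1 / (1 - p)

lemma hasDerivAt_chokePotential {p : ℝ} (hp₀ : p ≠ 0) (hp₁ : p ≠ 1) :
    HasDerivAt chokePotential (1 / (p * (1 - p) ^ 2)) p := by
  have hq : 1 - p ≠ 0 := sub_ne_zero.mpr hp₁.symm
  have hsub : HasDerivAt (fun x : ℝ => 1 - x) (-1) p := by
    simpa using (hasDerivAt_id p).const_sub 1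
  have hodds : HasDerivAt (fun x : ℝ => x / (1 - x)) (1 / (1 - p) ^ 2) p := by
    refine ((hasDerivAt_id' p).fun_div hsub hq).congr_deriv ?_
    field_simp
    ring
  have hlog := hodds.log (div_ne_zero hp₀ hq)
  have hrecip := (hasDerivAt_const p (1 : ℝ)).fun_div hsub hq
  refine (hlog.fun_add hrecip).congr_deriv ?_
  field_simp
  ring

lemma eq_mul_mul_sq_of_div_add_div_one_sub_eq {p d K : ℝ} (hp₀ : p ≠ 0) (hp₁ : p ≠ 1)
    (h : d / p + d / (1 - p) = K * (1 - p)) : d = K * p * (1 - p) ^ 2 := by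
  have hq : 1 - p ≠ 0 := sub_ne_zero.mpr hp₁.symm
  field_simp at h
  linear_combination h

lemma hasDerivAt_chokePotential_comp {ρ : ℝ → ℝ} {d K y : ℝ} (hρ : HasDerivAt ρ d y)
    (hρ₀ : ρ y ≠ 0) (hρ₁ : ρ y ≠ 1) (hode : d / ρ y + d / (1 - ρ y) = K * (1 - ρ y)) :
    HasDerivAt (chokePotential ∘ ρ) K y := by
  have hq : 1 - ρ y ≠ 0 := sub_ne_zero.mpr hρ₁.symm
  refine ((hasDerivAt_chokePotential hρ₀ hρ₁).comp y hρ).congr_deriv ?_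
  rw [eq_mul_mul_sq_of_div_add_div_one_sub_eq hρ₀ hρ₁ hode]
  field_simp

lemma eq_add_mul_sub_of_hasDerivAt_const {f : ℝ → ℝ} {a b K : ℝ}
    (hf : ∀ x ∈ Icc a b, HasDerivAt f K x) : ∀ x ∈ Icc a b, f x = f a + K * (x - a) := by
  have hline : ∀ x, HasDerivAt (fun x => f a + K * (x - a)) K x := fun x => by
    simpa using ((hasDerivAt_id x).sub_const a).const_mul K |>.const_add (f a)
  refine eq_of_has_deriv_right_eq (fun x hx => (hf x (Ico_subset_Icc_self hx)).hasDerivWithinAt)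
    (fun x _ => (hline x).hasDerivWithinAt)
    (fun x hx => (hf x hx).continuousAt.continuousWithinAt)
    (fun x _ => (hline x).continuousAt.continuousWithinAt) (by simp)

lemma log_odds_mul_inv_odds {p q : ℝ} (hp₀ : p ≠ 0) (hp₁ : p ≠ 1) (hq₀ : q ≠ 0) (hq₁ : q ≠ 1) :
    Real.log ((p / (1 - p)) * ((1 - q) / q)) =
      Real.log (p / (1 - p)) - Real.log (q / (1 - q)) := by
  have hp : 1 - p ≠ 0 := sub_ne_zero.mpr hp₁.symm
  have hq : 1 - q ≠ 0 := sub_ne_zero.mpr hq₁.symm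
  rw [Real.log_mul (div_ne_zero hp₀ hp) (div_ne_zero hq hq₀), ← inv_div q (1 - q), Real.log_inv]
  ring

theorem choke_position_probability_general (b K ρ₀ : ℝ)
    (ρ ρ' : ℝ → ℝ) (h0 : ρ 0 = ρ₀)
    (hmem : ∀ y ∈ Set.Icc (0:ℝ) b, ρ y ∈ Set.Ioo (0:ℝ) 1)
    (hderiv : ∀ y ∈ Set.Icc (0:ℝ) b, HasDerivAt ρ (ρ' y) y)
    (hode : ∀ y ∈ Set.Icc (0:ℝ) b,
      ρ' y / ρ y + ρ' y / (1 - ρ y) = K * (1 - ρ y)) :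
    ∀ y ∈ Set.Icc (0:ℝ) b,
      K * y = Real.log ((ρ y / (1 - ρ y)) * ((1 - ρ₀)/ρ₀))
        + 1/(1 - ρ y) - 1/(1 - ρ₀) := by
  have hρ₀ : ∀ x ∈ Icc 0 b, ρ x ≠ 0 := fun x hx => (hmem x hx).1.ne'
  have hρ₁ : ∀ x ∈ Icc 0 b, ρ x ≠ 1 := fun x hx => (hmem x hx).2.ne
  intro y hy
  have hzero : (0 : ℝ) ∈ Icc 0 b := ⟨le_rfl, hy.1.trans hy.2⟩
  have hlinear := eq_add_mul_sub_of_hasDerivAt_const (fun x hx =>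
    hasDerivAt_chokePotential_comp (hderiv x hx) (hρ₀ x hx) (hρ₁ x hx) (hode x hx)) y hy
  simp only [Function.comp_apply, chokePotential, h0, sub_zero] at hlinear
  rw [log_odds_mul_inv_odds (hρ₀ y hy) (hρ₁ y hy) (h0 ▸ hρ₀ 0 hzero) (h0 ▸ hρ₁ 0 hzero)]
  linarith

theorem choke_position_probability (b K ρ₀ : ℝ) (hb : 0 < b) (hK : K < 0)
    (hρ₀ : ρ₀ ∈ Set.Ioo (0:ℝ) 1)
    (ρ ρ' : ℝ → ℝ) (h0 : ρ 0 = ρ₀)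
    (hmem : ∀ y ∈ Set.Icc (0:ℝ) b, ρ y ∈ Set.Ioo (0:ℝ) 1)
    (hderiv : ∀ y ∈ Set.Icc (0:ℝ) b, HasDerivAt ρ (ρ' y) y)
    (hode : ∀ y ∈ Set.Icc (0:ℝ) b,
      ρ' y / ρ y + ρ' y / (1 - ρ y) = K * (1 - ρ y)) :
    ∀ y ∈ Set.Icc (0:ℝ) b,
      K * y = Real.log ((ρ y / (1 - ρ y)) * ((1 - ρ₀)/ρ₀))
        + 1/(1 - ρ y) - 1/(1 - ρ₀) :=
  choke_position_probability_general b K ρ₀ ρ ρ' h0 hmem hderiv hode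
end

section
/- Let a > 0, β < 0, x₀ > 0, T > 0, and let τ : [0,b] → [0,T] be any function with τ(b) = T. For x₀₂ ≥ 0 define, for y ∈ [0,b], μ(y) = [1 + a·e^{−x₀₂·β·T + β·τ(y)·(x₀₂ − x₀)}]⁻¹, and let ρ(y) = e^{x₀βτ(y)}/(a + e^{x₀βτ(y)}). Then for every y ∈ [0,b], μ(y) ≤ ρ(y) ≤ ρ₀ where ρ₀ = 1/(1+a); moreover equality μ(y) = ρ(y) holds for all y when x₀₂ = 0. -/
theorem choke_transient_upper_bound (a β x₀ x₀₂ T b : ℝ)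
    (ha : 0 < a) (hβ : β < 0) (hx₀ : 0 < x₀) (hx₀₂ : 0 ≤ x₀₂) (hT : 0 < T)
    (τ : ℝ → ℝ) (hτmem : ∀ y ∈ Set.Icc (0:ℝ) b, τ y ∈ Set.Icc (0:ℝ) T)
    (hτb : τ b = T)
    (μ ρ : ℝ → ℝ)
    (hμ : ∀ y, μ y = (1 + a * Real.exp (-(x₀₂*β*T) + β*τ y*(x₀₂ - x₀)))⁻¹)
    (hρ : ∀ y, ρ y = Real.exp (x₀*β*τ y) / (a + Real.exp (x₀*β*τ y))) :
    (∀ y ∈ Set.Icc (0:ℝ) b, μ y ≤ ρ y ∧ ρ y ≤ 1/(1+a)) ∧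
    (x₀₂ = 0 → ∀ y ∈ Set.Icc (0:ℝ) b, μ y = ρ y) := by
  have hρ' : ∀ y, ρ y = (1 + a * Real.exp (-(x₀*β*τ y)))⁻¹ := by
    intro y
    rw [hρ y]
    have he : (0:ℝ) < Real.exp (x₀*β*τ y) := Real.exp_pos _
    rw [Real.exp_neg]
    field_simp
    ring
  constructor
  · intro y hy
    obtain ⟨hτ0, hτT⟩ := hτmem y hy
    have hpos1 : (0:ℝ) < 1 + a * Real.exp (-(x₀*β*τ y)) := by positivity
    have hpos2 : (0:ℝ) < 1 + a * Real.exp (-(x₀₂*β*T) + β*τ y*(x₀₂ - x₀)) := by positivity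
    constructor
    · rw [hμ y, hρ' y]
      apply inv_anti₀ hpos1
      have hexp : Real.exp (-(x₀*β*τ y)) ≤ Real.exp (-(x₀₂*β*T) + β*τ y*(x₀₂ - x₀)) := by
        apply Real.exp_le_exp.mpr
        nlinarith [mul_nonneg hx₀₂ (mul_nonneg (le_of_lt (neg_pos.mpr hβ)) (sub_nonneg.mpr hτT))]
      nlinarith
    · rw [hρ' y, one_div]
      apply inv_anti₀ (by positivity)
      have : (1:ℝ) ≤ Real.exp (-(x₀*β*τ y)) := by
        rw [← Real.exp_zero]
        apply Real.exp_le_exp.mpr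
        nlinarith [mul_nonneg (mul_nonneg (le_of_lt (neg_pos.mpr hβ)) hx₀.le) hτ0]
      nlinarith
  · intro h0 y _
    rw [hμ y, hρ' y, h0]
    ring_nf
end

section
/- Let C > 0, μ₀ ∈ [0,1), h₀ ∈ [0,1/2), r ∈ [0,1), and x₀ > 0 satisfy the steady-state relation μ₀·C = x₀(1−r)(1−2h₀). Define a = (1−μ₀)C/(x₀(1−r)(1−h₀)) and ρ₀ = 1/(1+a). Then ρ₀ = x₀(1−r)(1−h₀)/(x₀(1−r)(1−h₀) + (1−μ₀)C), and moreover ρ₀ ≥ μ₀, with equality iff h₀ = 0. -/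
theorem choke_tail_prob_dominates (C μ₀ h₀ r x₀ : ℝ)
    (hC : 0 < C) (hμ : μ₀ ∈ Set.Ico (0:ℝ) 1) (hh : h₀ ∈ Set.Ico (0:ℝ) (1/2))
    (hr : r ∈ Set.Ico (0:ℝ) 1) (hx : 0 < x₀)
    (hss : μ₀ * C = x₀ * (1-r) * (1-2*h₀))
    (a ρ₀ : ℝ)
    (hA : a = (1-μ₀)*C / (x₀*(1-r)*(1-h₀)))
    (hρ : ρ₀ = 1/(1+a)) :
    ρ₀ = x₀*(1-r)*(1-h₀) / (x₀*(1-r)*(1-h₀) + (1-μ₀)*C) ∧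
    μ₀ ≤ ρ₀ ∧ (ρ₀ = μ₀ ↔ h₀ = 0) := by
  obtain ⟨hμ0, hμ1⟩ := hμ
  obtain ⟨hh0, hh1⟩ := hh
  obtain ⟨hr0, hr1⟩ := hr
  have hs : 0 < x₀ * (1-r) := by nlinarith
  have hD : 0 < x₀ * (1-r) * (1-h₀) := by nlinarith
  have hB : 0 < (1-μ₀) * C := by nlinarith
  have hDB : 0 < x₀*(1-r)*(1-h₀) + (1-μ₀)*C := by linarith
  have h1 : ρ₀ = x₀*(1-r)*(1-h₀) / (x₀*(1-r)*(1-h₀) + (1-μ₀)*C) := by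
    rw [hρ, hA]
    have hh' : (1:ℝ) - h₀ ≠ 0 := (by linarith : (0:ℝ) < 1-h₀).ne'
    field_simp
  have key : μ₀ * (x₀*(1-r)*(1-h₀) + (1-μ₀)*C) = x₀*(1-r)*(1-h₀) - (1-μ₀)*(x₀*(1-r))*h₀ := by
    nlinarith [hss]
  refine ⟨h1, ?_, ?_⟩
  · rw [h1, le_div_iff₀ hDB, key]
    nlinarith [mul_nonneg (mul_nonneg (by linarith : (0:ℝ) ≤ 1-μ₀) hs.le) hh0]
  · rw [h1]
    rw [div_eq_iff (ne_of_gt hDB)]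
    constructor
    · intro h
      have : (1-μ₀)*(x₀*(1-r))*h₀ = 0 := by nlinarith
      have hne : (1-μ₀)*(x₀*(1-r)) > 0 := by nlinarith
      rcases mul_eq_zero.mp this with h' | h'
      · linarith
      · exact h'
    · intro h
      rw [key, h]; ring
end

section
/- Let a > 0, β < 0, x₀ > 0, x₀₂ ≥ 0, T > 0, and let τ : [0,b] → [0,T] be continuous, strictly increasing with τ(0)=0, τ(b)=T. Define ρ(y) = e^{x₀βτ(y)}/(a+e^{x₀βτ(y)}) and μ(y) = [1 + ((1−ρ(y))/ρ(y))·e^{−x₀₂β(T−τ(y))}]⁻¹. Then μ(y) is strictly increasing in y when x₀₂ > x₀ and strictly decreasing in y when x₀₂ < x₀. Consequently, since the transmission time of the fluid at position y is T − τ(y), the transient utilization as a function of time is decreasing when x₀₂ > x₀ and increasing when x₀₂ < x₀. -/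
theorem choke_transient_monotone (a β x₀ x₀₂ T b : ℝ)
    (ha : 0 < a) (hβ : β < 0) (hx₀ : 0 < x₀) (hx₀₂ : 0 ≤ x₀₂)
    (hT : 0 < T) (hb : 0 < b)
    (τ : ℝ → ℝ) (hτc : ContinuousOn τ (Set.Icc (0:ℝ) b))
    (hτmono : StrictMonoOn τ (Set.Icc (0:ℝ) b))
    (hτ0 : τ 0 = 0) (hτb : τ b = T)
    (ρ μ : ℝ → ℝ)
    (hρ : ∀ y, ρ y = Real.exp (x₀*β*τ y) / (a + Real.exp (x₀*β*τ y)))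
    (hμ : ∀ y, μ y = (1 + ((1 - ρ y)/ρ y) * Real.exp (-(x₀₂*β*(T - τ y))))⁻¹) :
    (x₀ < x₀₂ → StrictMonoOn μ (Set.Icc (0:ℝ) b)) ∧
    (x₀₂ < x₀ → StrictAntiOn μ (Set.Icc (0:ℝ) b)) := by
  have hμ' : ∀ y, μ y = (1 + a * Real.exp (β*(x₀₂-x₀)*τ y - x₀₂*β*T))⁻¹ := by
    intro y
    have hE : (0:ℝ) < Real.exp (x₀*β*τ y) := Real.exp_pos _
    have haE : (0:ℝ) < a + Real.exp (x₀*β*τ y) := by linarith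
    have h1 : (1 - ρ y)/ρ y = a / Real.exp (x₀*β*τ y) := by
      rw [hρ]; field_simp; ring
    rw [hμ, h1, div_mul_eq_mul_div, mul_div_assoc, ← Real.exp_sub]
    congr 3
    ring
  have hpos : ∀ y, 0 < 1 + a * Real.exp (β*(x₀₂-x₀)*τ y - x₀₂*β*T) := by
    intro y
    have := Real.exp_pos (β*(x₀₂-x₀)*τ y - x₀₂*β*T)
    nlinarith
  constructor
  · intro hlt y1 hy1 y2 hy2 h12
    have hτlt : τ y1 < τ y2 := hτmono hy1 hy2 h12
    have hc : β*(x₀₂-x₀) < 0 := mul_neg_of_neg_of_pos hβ (by linarith)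
    have harg : β*(x₀₂-x₀)*τ y2 - x₀₂*β*T < β*(x₀₂-x₀)*τ y1 - x₀₂*β*T := by
      nlinarith
    have hexp := Real.exp_lt_exp.mpr harg
    rw [hμ' y1, hμ' y2]
    apply inv_strictAnti₀ (hpos y2)
    nlinarith
  · intro hlt y1 hy1 y2 hy2 h12
    have hτlt : τ y1 < τ y2 := hτmono hy1 hy2 h12
    have hc : 0 < β*(x₀₂-x₀) := mul_pos_of_neg_of_neg hβ (by linarith)
    have harg : β*(x₀₂-x₀)*τ y1 - x₀₂*β*T < β*(x₀₂-x₀)*τ y2 - x₀₂*β*T := by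
      nlinarith
    have hexp := Real.exp_lt_exp.mpr harg
    rw [hμ' y1, hμ' y2]
    apply inv_strictAnti₀ (hpos y1)
    nlinarith
end
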